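/- Let f be a homogeneous quadratic function on GF(q) with rank r_f and sign ε_f, let α ∈ Im(L_f) with x_α satisfying L_f(x_α) = −α/2, let β ∈ GF(q)*, and set S_4 = ∑_{z∈GF(p)} ∑_{x∈GF(q)} ζ_p^{f(x) − Tr((α − βz)x)}. If β ∈ Im(L_f) with x_β satisfying L_f(x_β) = −β/2, then: S_4 = ε_f p^{m+1} (p*)^{−r_f/2} ζ_p^{−f(x_α)} when f(x_β) = 0 and Tr(αx_β) = 0; S_4 = 0 when f(x_β) = 0 and Tr(αx_β) ≠ 0; and S_4 = ε_f η̄(−f(x_β)) p^m (p*)^{−(r_f−1)/2} ζ_p^{−f(x_α) + Tr(αx_β)²/(4 f(x_β))} when f(x_β) ≠ 0. If β ∉ Im(L_f), then S_4 = ε_f p^m (p*)^{−r_f/2} ζ_p^{−f(x_α)}. -/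

import Mathlib

noncomputable section

open Finset

/-- `ζ_p = e^{2πi/p}`, a primitive `p`-th root of unity. -/
def zetaP (p : ℕ) : ℂ := Complex.exp (2 * Real.pi * Complex.I / p)

/-- `ζ_p^c` for `c ∈ GF(p)`. -/
def eP (p : ℕ) (c : ZMod p) : ℂ := zetaP p ^ c.val

/-- The quadratic character `η̄` of `GF(p)` (with `η̄ 0 = 0`), valued in `ℂ`. -/
def chiP (p : ℕ) [Fact p.Prime] (c : ZMod p) : ℂ := ((quadraticChar (ZMod p) c : ℤ) : ℂ)

/-- The Gauss sum `√(p*) = ∑_{c ∈ GF(p)} η̄(c) ζ_p^c`, whose square is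
`p* = (-1)^((p-1)/2) * p`. -/
def GP (p : ℕ) [Fact p.Prime] : ℂ := ∑ c : ZMod p, chiP p c * eP p c


section Chars
variable {p : ℕ} [hp : Fact p.Prime]

lemma zetaP_prim : IsPrimitiveRoot (zetaP p) p := by
  have := Complex.isPrimitiveRoot_exp p (Nat.Prime.ne_zero hp.out)
  simpa [zetaP] using this

lemma zetaP_pow : zetaP p ^ p = 1 := zetaP_prim.pow_eq_one

/-- the additive character -/
def psiP (p : ℕ) [Fact p.Prime] : AddChar (ZMod p) ℂ := AddChar.zmodChar p (zetaP_pow)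

lemma eP_eq_psiP (c : ZMod p) : eP p c = psiP p c := rfl

lemma psiP_primitive : (psiP p).IsPrimitive :=
  AddChar.zmodChar_primitive_of_primitive_root p zetaP_prim

lemma eP_add (a b : ZMod p) : eP p (a + b) = eP p a * eP p b := by
  rw [eP_eq_psiP, eP_eq_psiP, eP_eq_psiP, AddChar.map_add_eq_mul]

lemma eP_zero : eP p (0 : ZMod p) = 1 := by
  rw [eP_eq_psiP, AddChar.map_zero_eq_one]

lemma eP_ne_zero (a : ZMod p) : eP p a ≠ 0 := by
  intro h
  have h2 : eP p a * eP p (-a) = 1 := by rw [← eP_add]; simp [eP_zero]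
  rw [h, zero_mul] at h2; exact zero_ne_one h2

lemma eP_eq_one_iff (a : ZMod p) : eP p a = 1 ↔ a = 0 := by
  rw [eP_eq_psiP]
  exact AddChar.IsPrimitive.zmod_char_eq_one_iff p psiP_primitive a

lemma sum_eP_eq_zero : ∑ c : ZMod p, eP p c = 0 := by
  have h1 : (psiP p) ≠ 1 := by
    rw [AddChar.zmod_char_ne_one_iff]
    intro h
    rw [← eP_eq_psiP, eP_eq_one_iff] at h
    exact one_ne_zero h
  exact AddChar.sum_eq_zero_iff_ne_zero.mpr h1

lemma sum_eP_mul {t : ZMod p} (ht : t ≠ 0) : ∑ z : ZMod p, eP p (t * z) = 0 := by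
  rw [← sum_eP_eq_zero (p := p)]
  exact Fintype.sum_bijective (fun z => t * z)
    (mulLeft_bijective₀ t ht) _ _ (fun z => rfl)

/-- the quadratic character valued in ℂ -/
def chiC (p : ℕ) [Fact p.Prime] : MulChar (ZMod p) ℂ :=
  (quadraticChar (ZMod p)).ringHomComp (Int.castRingHom ℂ)

lemma chiC_eq (c : ZMod p) : chiC p c = chiP p c := rfl

lemma GP_eq_gaussSum : GP p = gaussSum (chiC p) (psiP p) := by
  unfold GP gaussSum
  exact Finset.sum_congr rfl (fun c _ => by rw [← chiC_eq, ← eP_eq_psiP])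

variable (hp2 : p ≠ 2)
include hp2

lemma ringChar_zmod_ne_two : ringChar (ZMod p) ≠ 2 := by
  rw [ZMod.ringChar_zmod_n]; exact hp2

lemma chiC_ne_one : chiC p ≠ 1 := by
  rw [chiC, MulChar.ringHomComp_ne_one_iff (fun a b h => by simpa using h)]
  obtain ⟨a, ha⟩ := quadraticChar_exists_neg_one (ringChar_zmod_ne_two hp2)
  intro h
  rw [h] at ha
  have ha0 : a ≠ 0 := by
    intro h0; rw [h0, MulChar.map_zero] at ha; norm_num at ha
  rw [MulChar.one_apply (isUnit_iff_ne_zero.mpr ha0)] at ha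
  norm_num at ha

lemma GP_ne_zero : GP p ≠ 0 := by
  rw [GP_eq_gaussSum]
  refine gaussSum_ne_zero_of_nontrivial ?_ (chiC_ne_one hp2) psiP_primitive
  rw [ZMod.card]
  exact_mod_cast Nat.Prime.ne_zero hp.out

omit hp2 in
lemma chiP_mul (a b : ZMod p) : chiP p (a * b) = chiP p a * chiP p b := by
  rw [← chiC_eq, ← chiC_eq, ← chiC_eq, map_mul]

omit hp2 in
lemma chiP_sq {a : ZMod p} (h : a ≠ 0) : chiP p a * chiP p a = 1 := by
  unfold chiP
  rw [← Int.cast_mul, ← sq, quadraticChar_sq_one h]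
  norm_num

omit hp2 in
lemma chiP_inv (a : ZMod p) : chiP p a⁻¹ = chiP p a := by
  by_cases h : a = 0
  · simp [h]
  · have h2 : chiP p a⁻¹ * chiP p a = 1 := by
      rw [← chiP_mul, inv_mul_cancel₀ h]
      simp [chiP]
    have := chiP_sq (p := p) h
    calc chiP p a⁻¹ = chiP p a⁻¹ * (chiP p a * chiP p a) := by rw [this, mul_one]
    _ = (chiP p a⁻¹ * chiP p a) * chiP p a := by ring
    _ = chiP p a := by rw [h2, one_mul]

lemma sum_eP_sq {b : ZMod p} (hb : b ≠ 0) :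
    ∑ z : ZMod p, eP p (b * z ^ 2) = chiP p b * GP p := by
  have hcnt : ∀ a : ZMod p,
      (((univ : Finset (ZMod p)).filter fun z => z ^ 2 = a).card : ℂ) = chiP p a + 1 := by
    intro a
    have h := quadraticChar_card_sqrts (ringChar_zmod_ne_two hp2) a
    rw [Set.toFinset_setOf] at h
    simpa [chiP] using congrArg (fun t : ℤ => (t : ℂ)) h
  have step1 : ∑ z : ZMod p, eP p (b * z ^ 2)
      = ∑ a : ZMod p, (((univ : Finset (ZMod p)).filter fun z => z ^ 2 = a).card) •
          eP p (b * a) := by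
    rw [Finset.sum_comp (fun a => eP p (b * a)) (fun z : ZMod p => z ^ 2)]
    refine Finset.sum_subset (Finset.subset_univ _) ?_
    intro a _ ha
    have : ((univ : Finset (ZMod p)).filter fun z => z ^ 2 = a) = ∅ := by
      rw [Finset.filter_eq_empty_iff]
      intro z _ hz
      exact ha (Finset.mem_image.mpr ⟨z, Finset.mem_univ z, hz⟩)
    rw [this]
    simp
  rw [step1]
  have step2 : ∀ a : ZMod p,
      (((univ : Finset (ZMod p)).filter fun z => z ^ 2 = a).card) • eP p (b * a)
      = chiP p a * eP p (b * a) + eP p (b * a) := by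
    intro a
    rw [nsmul_eq_mul, hcnt a]
    ring
  rw [Finset.sum_congr rfl (fun a _ => step2 a), Finset.sum_add_distrib,
    sum_eP_mul hb, add_zero]
  have step3 : ∑ a : ZMod p, chiP p a * eP p (b * a)
      = ∑ c : ZMod p, chiP p (b⁻¹ * c) * eP p c := by
    refine Fintype.sum_bijective (fun a => b * a) (mulLeft_bijective₀ b hb) _ _ ?_
    intro a
    rw [inv_mul_cancel_left₀ hb]
  rw [step3]
  have step4 : ∀ c : ZMod p, chiP p (b⁻¹ * c) * eP p c
      = chiP p b * (chiP p c * eP p c) := by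
    intro c
    rw [chiP_mul, chiP_inv]
    ring
  rw [Finset.sum_congr rfl (fun c _ => step4 c), ← Finset.mul_sum]
  rfl

end Chars

theorem stmt6
    (p m : ℕ) [Fact p.Prime] (hp2 : p ≠ 2) [NeZero m]
    (F : Type) [Field F] [Fintype F] [DecidableEq F] [Algebra (ZMod p) F]
    (hcard : Fintype.card F = p ^ m)
    -- `f` is a homogeneous quadratic function with coefficients `a`
    (f : F → ZMod p) (a : ZMod m → F)
    (hf : ∀ x, f x = ∑ i : ZMod m,
      Algebra.trace (ZMod p) F (a i * x ^ (p ^ (i.val) + 1)))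
    -- `L` is the associated linear map `L_f`
    (L : F → F)
    (hL : ∀ x, L x = (2 : F)⁻¹ *
      ∑ i : ZMod m, (a i + a (-i) ^ (p ^ (i.val))) * x ^ (p ^ (i.val)))
    -- `r` is the rank of `f` (so that `#Ker L_f = p^(m-r)`)
    (r : ℕ) (hrm : r ≤ m)
    (hker : {x : F | L x = 0}.ncard = p ^ (m - r))
    -- `ε` is the sign of `f`
    (ε : ℂ) (hε : ε = 1 ∨ ε = -1)
    (hsign : ∑ x : F, eP p (f x) = ε * (p : ℂ) ^ m * GP p ^ (-(r : ℤ)))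
    (α : F) (hα : α ∈ Set.range L)
    (xα : F) (hxα : L xα = -(α / 2))
    (β : F) (hβ : β ≠ 0) :
    (∀ xβ : F, L xβ = -(β / 2) → f xβ = 0 → Algebra.trace (ZMod p) F (α * xβ) = 0 →
      ∑ z : ZMod p, ∑ x : F, eP p (f x - Algebra.trace (ZMod p) F ((α - algebraMap (ZMod p) F z * β) * x))
        = ε * (p : ℂ) ^ (m + 1) * GP p ^ (-(r : ℤ)) * eP p (-(f xα))) ∧
    (∀ xβ : F, L xβ = -(β / 2) → f xβ = 0 → Algebra.trace (ZMod p) F (α * xβ) ≠ 0 →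
      ∑ z : ZMod p, ∑ x : F, eP p (f x - Algebra.trace (ZMod p) F ((α - algebraMap (ZMod p) F z * β) * x)) = 0) ∧
    (∀ xβ : F, L xβ = -(β / 2) → f xβ ≠ 0 →
      ∑ z : ZMod p, ∑ x : F, eP p (f x - Algebra.trace (ZMod p) F ((α - algebraMap (ZMod p) F z * β) * x))
        = ε * chiP p (-(f xβ)) * (p : ℂ) ^ m * GP p ^ (-((r : ℤ) - 1))
          * eP p (-(f xα) + (Algebra.trace (ZMod p) F (α * xβ)) ^ 2 / (4 * f xβ))) ∧
    (β ∉ Set.range L →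
      ∑ z : ZMod p, ∑ x : F, eP p (f x - Algebra.trace (ZMod p) F ((α - algebraMap (ZMod p) F z * β) * x))
        = ε * (p : ℂ) ^ m * GP p ^ (-(r : ℤ)) * eP p (-(f xα))) := by
  have hpp : p.Prime := Fact.out
  haveI : NeZero p := ⟨hpp.ne_zero⟩
  have hchar : CharP F p := charP_of_injective_algebraMap (algebraMap (ZMod p) F).injective p
  have h2p : (2 : ZMod p) ≠ 0 := by
    intro h
    have h2 : (p : ℕ) ∣ 2 := by
      have : ((2 : ℕ) : ZMod p) = 0 := by exact_mod_cast h
      exact (ZMod.natCast_eq_zero_iff 2 p).mp this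
    exact hp2 ((Nat.prime_dvd_prime_iff_eq hpp Nat.prime_two).mp h2)
  have h2F : (2 : F) ≠ 0 := by
    have := hchar
    intro h
    have h2 : (p : ℕ) ∣ 2 := by
      have : ((2 : ℕ) : F) = 0 := by exact_mod_cast h
      exact (CharP.cast_eq_zero_iff F p 2).mp this
    have hple := Nat.le_of_dvd (by norm_num) h2
    have := hpp.two_le
    omega
  have hxm : ∀ x : F, x ^ (p ^ m) = x := by
    intro x
    rw [← hcard]
    exact FiniteField.pow_card x
  -- Frobenius fixes the trace
  haveI : ExpChar F p := ExpChar.prime hpp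
  have tr_frob : ∀ x : F, Algebra.trace (ZMod p) F (x ^ p) = Algebra.trace (ZMod p) F x := by
    intro x
    let e : F ≃ₐ[ZMod p] F := AlgEquiv.ofRingEquiv (f := frobeniusEquiv F p) (fun z => by
      show frobeniusEquiv F p (algebraMap (ZMod p) F z) = algebraMap (ZMod p) F z
      rw [frobeniusEquiv_apply, frobenius_def, ← map_pow, ZMod.pow_card])
    have h := Algebra.trace_eq_of_algEquiv e x
    have he : e x = x ^ p := by
      show frobeniusEquiv F p x = x ^ p
      rw [frobeniusEquiv_apply, frobenius_def]
    rw [he] at h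
    exact h
  have tr_frob_pow : ∀ (k : ℕ) (x : F),
      Algebra.trace (ZMod p) F (x ^ p ^ k) = Algebra.trace (ZMod p) F x := by
    intro k
    induction k with
    | zero => intro x; simp
    | succ n ih =>
      intro x
      rw [pow_succ, pow_mul]
      rw [tr_frob (x ^ p ^ n), ih x]
  have hz_pow : ∀ (z : ZMod p) (k : ℕ),
      (algebraMap (ZMod p) F z) ^ (p ^ k) = algebraMap (ZMod p) F z := by
    intro z k
    induction k with
    | zero => simp
    | succ n ih => rw [pow_succ, pow_mul, ih, ← map_pow, ZMod.pow_card]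
  have tr_smul : ∀ (z : ZMod p) (w : F),
      Algebra.trace (ZMod p) F (algebraMap (ZMod p) F z * w)
        = z * Algebra.trace (ZMod p) F w := by
    intro z w
    rw [← Algebra.smul_def, map_smul, smul_eq_mul]
  have h2alg : algebraMap (ZMod p) F 2 = 2 := by
    rw [map_ofNat]
  -- polarization identity
  have hpol : ∀ x y : F, f (x + y) = f x + f y
      + 2 * Algebra.trace (ZMod p) F (L x * y) := by
    intro x y
    have hexp : ∀ i : ZMod m, a i * (x + y) ^ (p ^ i.val + 1)
        = a i * x ^ (p ^ i.val + 1) + a i * y ^ (p ^ i.val + 1)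
          + a i * (x ^ p ^ i.val * y) + a i * (x * y ^ p ^ i.val) := by
      intro i
      rw [pow_succ, add_pow_char_pow]
      ring
    have hfsplit : f (x + y) = f x + f y
        + ∑ i : ZMod m, Algebra.trace (ZMod p) F (a i * (x ^ p ^ i.val * y))
        + ∑ i : ZMod m, Algebra.trace (ZMod p) F (a i * (x * y ^ p ^ i.val)) := by
      rw [hf (x + y), hf x, hf y,
        ← Finset.sum_add_distrib, ← Finset.sum_add_distrib, ← Finset.sum_add_distrib]
      refine Finset.sum_congr rfl (fun i _ => ?_)
      rw [hexp i, map_add, map_add, map_add]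
    have key : ∀ i : ZMod m, Algebra.trace (ZMod p) F (a (-i) * (x * y ^ p ^ (-i).val))
        = Algebra.trace (ZMod p) F (a (-i) ^ p ^ i.val * (x ^ p ^ i.val * y)) := by
      intro i
      rw [← tr_frob_pow i.val (a (-i) * (x * y ^ p ^ (-i).val))]
      congr 1
      rw [mul_pow, mul_pow, ← pow_mul y, ← pow_add]
      have hyy : y ^ p ^ ((-i).val + i.val) = y := by
        by_cases h0 : i = 0
        · subst h0; simp
        · rw [ZMod.neg_val, if_neg h0]
          have hlt : i.val ≤ m := le_of_lt (ZMod.val_lt i)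
          rw [Nat.sub_add_cancel hlt]
          exact hxm y
      rw [hyy]
    have hcross : ∑ i : ZMod m, Algebra.trace (ZMod p) F (a i * (x * y ^ p ^ i.val))
        = ∑ i : ZMod m, Algebra.trace (ZMod p) F (a (-i) ^ p ^ i.val * (x ^ p ^ i.val * y)) := by
      have hre := Fintype.sum_equiv (Equiv.neg (ZMod m))
        (fun i => Algebra.trace (ZMod p) F (a (-i) * (x * y ^ p ^ (-i).val)))
        (fun i => Algebra.trace (ZMod p) F (a i * (x * y ^ p ^ i.val)))
        (fun i => by simp)
      rw [← hre]
      exact Finset.sum_congr rfl (fun i _ => key i)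
    have h2L : 2 * Algebra.trace (ZMod p) F (L x * y)
        = ∑ i : ZMod m, Algebra.trace (ZMod p) F (a i * (x ^ p ^ i.val * y))
          + ∑ i : ZMod m, Algebra.trace (ZMod p) F (a (-i) ^ p ^ i.val * (x ^ p ^ i.val * y)) := by
      have h2Lx : (2 : F) * L x
          = ∑ i : ZMod m, (a i + a (-i) ^ p ^ i.val) * x ^ p ^ i.val := by
        rw [hL x, ← mul_assoc, mul_inv_cancel₀ h2F, one_mul]
      have hstep : (2 : ZMod p) * Algebra.trace (ZMod p) F (L x * y)
          = Algebra.trace (ZMod p) F ((2 : F) * L x * y) := by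
        rw [mul_assoc, ← h2alg, tr_smul]
      rw [hstep, h2Lx, Finset.sum_mul, map_sum, ← Finset.sum_add_distrib]
      refine Finset.sum_congr rfl (fun i _ => ?_)
      rw [← map_add]
      congr 1
      ring
    rw [hfsplit, hcross, h2L]
    ring
  -- symmetry of the bilinear form
  have hsymm : ∀ x y : F, Algebra.trace (ZMod p) F (L x * y)
      = Algebra.trace (ZMod p) F (L y * x) := by
    intro x y
    have h1 := hpol x y
    have h2 := hpol y x
    rw [add_comm y x, add_comm (f y) (f x)] at h2
    exact mul_left_cancel₀ h2p (add_left_cancel (h1.symm.trans h2))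
  -- linearity of L
  have hLadd : ∀ x y : F, L (x + y) = L x + L y := by
    intro x y
    rw [hL (x + y), hL x, hL y]
    rw [← mul_add, ← Finset.sum_add_distrib]
    congr 1
    refine Finset.sum_congr rfl (fun i _ => ?_)
    rw [add_pow_char_pow]
    ring
  have hLsmul : ∀ (z : ZMod p) (x : F),
      L (algebraMap (ZMod p) F z * x) = algebraMap (ZMod p) F z * L x := by
    intro z x
    rw [hL (algebraMap (ZMod p) F z * x), hL x]
    rw [Finset.mul_sum, Finset.mul_sum, Finset.mul_sum]
    refine Finset.sum_congr rfl (fun i _ => ?_)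
    rw [mul_pow, hz_pow]
    ring
  -- scaling of f
  have hscal : ∀ (z : ZMod p) (x : F),
      f (algebraMap (ZMod p) F z * x) = z ^ 2 * f x := by
    intro z x
    rw [hf (algebraMap (ZMod p) F z * x), hf x, Finset.mul_sum]
    refine Finset.sum_congr rfl (fun i _ => ?_)
    have : a i * (algebraMap (ZMod p) F z * x) ^ (p ^ i.val + 1)
        = algebraMap (ZMod p) F (z ^ 2) * (a i * x ^ (p ^ i.val + 1)) := by
      rw [mul_pow, pow_succ ((algebraMap (ZMod p) F) z), hz_pow, map_pow]
      ring
    rw [this, tr_smul]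
  -- f vanishes on the kernel of L
  have hfker : ∀ u : F, L u = 0 → f u = 0 := by
    intro u hu
    have h1 := hpol u u
    rw [hu, zero_mul, map_zero, mul_zero, add_zero] at h1
    have h2 : f (u + u) = 4 * f u := by
      have : u + u = algebraMap (ZMod p) F 2 * u := by
        rw [h2alg]; ring
      rw [this, hscal]
      norm_num
    rw [h2] at h1
    have h3 : 2 * f u = 0 := by linear_combination h1
    rcases mul_eq_zero.mp h3 with h | h
    · exact absurd h h2p
    · exact h

  -- ==== linear algebra: range L = orthogonal complement of ker L ====
  haveI : Module.Finite (ZMod p) F := Module.finite_iff_finite.mpr inferInstance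
  haveI : Algebra.IsAlgebraic (ZMod p) F := Algebra.IsAlgebraic.of_finite _ _
  haveI : Algebra.IsSeparable (ZMod p) F := inferInstance
  set Lm : F →ₗ[ZMod p] F :=
    { toFun := L,
      map_add' := hLadd,
      map_smul' := fun z x => by
        simp only [RingHom.id_apply]
        rw [Algebra.smul_def, Algebra.smul_def]
        exact hLsmul z x } with hLm
  have hrangeeq : Set.range L = (LinearMap.range Lm : Set F) := by
    ext y
    constructor
    · rintro ⟨x, rfl⟩; exact ⟨x, rfl⟩
    · rintro ⟨x, rfl⟩; exact ⟨x, rfl⟩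
  have hEx : ∀ γ : F, γ ∉ Set.range L →
      ∃ u : F, L u = 0 ∧ Algebra.trace (ZMod p) F (γ * u) ≠ 0 := by
    intro γ hγ
    have hnd : (Algebra.traceForm (ZMod p) F).Nondegenerate :=
      traceForm_nondegenerate (ZMod p) F
    have hrefl : (Algebra.traceForm (ZMod p) F).IsRefl :=
      (Algebra.traceForm_isSymm (R := ZMod p) (S := F)).isRefl
    have hle : LinearMap.range Lm ≤
        (Algebra.traceForm (ZMod p) F).orthogonal (LinearMap.ker Lm) := by
      rintro y ⟨x, rfl⟩
      rw [LinearMap.BilinForm.mem_orthogonal_iff]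
      intro n hn
      have hn0 : L n = 0 := hn
      show Algebra.traceForm (ZMod p) F n (Lm x) = 0
      rw [Algebra.traceForm_apply]
      have : (Lm x : F) = L x := rfl
      rw [this, mul_comm, hsymm x n, hn0, zero_mul, map_zero]
    -- cardinality and finrank bookkeeping
    have hfrF : Module.finrank (ZMod p) F = m := by
      have h1 : Fintype.card F = p ^ Module.finrank (ZMod p) F := by
        have := Module.card_eq_pow_finrank (K := ZMod p) (V := F)
        rwa [ZMod.card] at this
      rw [hcard] at h1
      exact (Nat.pow_right_injective hpp.two_le h1.symm)
    have hkerset : {x : F | L x = 0} = (LinearMap.ker Lm : Set F) := by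
      ext x
      simp only [Set.mem_setOf_eq, SetLike.mem_coe, LinearMap.mem_ker]
      exact Iff.rfl
    haveI : Fintype (LinearMap.ker Lm) := Fintype.ofFinite _
    have hcardker : Fintype.card (LinearMap.ker Lm) = p ^ (m - r) := by
      rw [← hker, hkerset, ← Nat.card_coe_set_eq, Nat.card_eq_fintype_card]
      exact Fintype.card_congr (Equiv.setCongr rfl)
    have hfrker : Module.finrank (ZMod p) (LinearMap.ker Lm) = m - r := by
      have h1 : Fintype.card (LinearMap.ker Lm)
          = p ^ Module.finrank (ZMod p) (LinearMap.ker Lm) := by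
        have := Module.card_eq_pow_finrank (K := ZMod p) (V := LinearMap.ker Lm)
        rwa [ZMod.card] at this
      rw [hcardker] at h1
      exact (Nat.pow_right_injective hpp.two_le h1).symm
    have hfrrange : Module.finrank (ZMod p) (LinearMap.range Lm) = m - (m - r) := by
      have := LinearMap.finrank_range_add_finrank_ker Lm
      rw [hfrF, hfrker] at this
      omega
    have hfrorth : Module.finrank (ZMod p)
        ((Algebra.traceForm (ZMod p) F).orthogonal (LinearMap.ker Lm)) = m - (m - r) := by
      rw [LinearMap.BilinForm.finrank_orthogonal hnd, hfrF, hfrker]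
    have heq : LinearMap.range Lm
        = (Algebra.traceForm (ZMod p) F).orthogonal (LinearMap.ker Lm) :=
      Submodule.eq_of_le_of_finrank_eq hle (by rw [hfrrange, hfrorth])
    have hγ' : γ ∉ (Algebra.traceForm (ZMod p) F).orthogonal (LinearMap.ker Lm) := by
      rw [← heq]
      intro hc
      exact hγ (hrangeeq ▸ hc)
    rw [LinearMap.BilinForm.mem_orthogonal_iff] at hγ'
    push_neg at hγ'
    obtain ⟨u, hu, hu2⟩ := hγ'
    refine ⟨u, hu, ?_⟩
    intro hc
    apply hu2
    show Algebra.traceForm (ZMod p) F u γ = 0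
    rw [Algebra.traceForm_apply, mul_comm]
    exact hc
  have trhalf : ∀ γ xγ : F, L xγ = -(γ / 2) → ∀ w : F,
      2 * Algebra.trace (ZMod p) F (L xγ * w) = - Algebra.trace (ZMod p) F (γ * w) := by
    intro γ xγ hxγ w
    have h1 : (2 : ZMod p) * Algebra.trace (ZMod p) F (L xγ * w)
        = Algebra.trace (ZMod p) F ((2 : F) * (L xγ * w)) := by
      rw [← h2alg, tr_smul]
    rw [h1, hxγ]
    have h2 : (2 : F) * (-(γ / 2) * w) = -(γ * w) := by
      field_simp
    rw [h2, map_neg]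
  -- ==== evaluation of the inner sums ====
  have Smain : ∀ γ xγ : F, L xγ = -(γ / 2) →
      ∑ x : F, eP p (f x - Algebra.trace (ZMod p) F (γ * x))
        = ε * (p : ℂ) ^ m * GP p ^ (-(r : ℤ)) * eP p (-(f xγ)) := by
    intro γ xγ hxγ
    have key : ∀ x : F, f x - Algebra.trace (ZMod p) F (γ * x) = f (x + xγ) - f xγ := by
      intro x
      have h1 := hpol x xγ
      rw [hsymm x xγ] at h1
      linear_combination -h1 - trhalf γ xγ hxγ x
    calc ∑ x : F, eP p (f x - Algebra.trace (ZMod p) F (γ * x))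
        = ∑ x : F, eP p (f (x + xγ) - f xγ) :=
          Finset.sum_congr rfl (fun x _ => by rw [key x])
      _ = (∑ x : F, eP p (f (x + xγ))) * eP p (-(f xγ)) := by
          rw [Finset.sum_mul]
          exact Finset.sum_congr rfl (fun x _ => by rw [sub_eq_add_neg, eP_add])
      _ = (∑ x : F, eP p (f x)) * eP p (-(f xγ)) := by
          congr 1
          exact Fintype.sum_equiv (Equiv.addRight xγ) _ _ (fun x => rfl)
      _ = ε * (p : ℂ) ^ m * GP p ^ (-(r : ℤ)) * eP p (-(f xγ)) := by rw [hsign]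
  have Szero : ∀ γ : F, γ ∉ Set.range L →
      ∑ x : F, eP p (f x - Algebra.trace (ZMod p) F (γ * x)) = 0 := by
    intro γ hγ
    obtain ⟨u, hu, htru⟩ := hEx γ hγ
    have hadd : ∀ x : F, f (x + u) = f x := by
      intro x
      rw [hpol x u, hsymm x u, hu, zero_mul, map_zero, mul_zero, add_zero, hfker u hu, add_zero]
    have hstep : ∑ x : F, eP p (f x - Algebra.trace (ZMod p) F (γ * x))
        = (∑ x : F, eP p (f x - Algebra.trace (ZMod p) F (γ * x)))
            * eP p (-(Algebra.trace (ZMod p) F (γ * u))) := by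
      calc ∑ x : F, eP p (f x - Algebra.trace (ZMod p) F (γ * x))
          = ∑ x : F, eP p (f (x + u) - Algebra.trace (ZMod p) F (γ * (x + u))) :=
            (Fintype.sum_equiv (Equiv.addRight u) _ _ (fun x => rfl)).symm
        _ = ∑ x : F, eP p (f x - Algebra.trace (ZMod p) F (γ * x))
              * eP p (-(Algebra.trace (ZMod p) F (γ * u))) := by
            refine Finset.sum_congr rfl (fun x _ => ?_)
            rw [hadd x, ← eP_add]
            congr 1
            rw [mul_add, map_add]
            ring
        _ = _ := by rw [← Finset.sum_mul]
    have hne : eP p (-(Algebra.trace (ZMod p) F (γ * u))) ≠ 1 := by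
      rw [Ne, eP_eq_one_iff, neg_eq_zero]
      exact htru
    have h0 : (∑ x : F, eP p (f x - Algebra.trace (ZMod p) F (γ * x)))
        * (1 - eP p (-(Algebra.trace (ZMod p) F (γ * u)))) = 0 := by
      linear_combination hstep
    rcases mul_eq_zero.mp h0 with h | h
    · exact h
    · exact absurd (by linear_combination -h) hne
  -- ==== the values f(xα - z xβ) ====
  have hLz : ∀ (z : ZMod p) (xβ : F), L xβ = -(β / 2) →
      L (xα - algebraMap (ZMod p) F z * xβ)
        = -((α - algebraMap (ZMod p) F z * β) / 2) := by
    intro z xβ hxβ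
    have h1 : xα - algebraMap (ZMod p) F z * xβ
        = xα + algebraMap (ZMod p) F (-z) * xβ := by
      rw [map_neg]; ring
    rw [h1, hLadd, hLsmul, hxα, hxβ, map_neg]
    ring
  have hfz : ∀ (z : ZMod p) (xβ : F), L xβ = -(β / 2) →
      f (xα - algebraMap (ZMod p) F z * xβ)
        = f xα + z ^ 2 * f xβ + z * Algebra.trace (ZMod p) F (α * xβ) := by
    intro z xβ hxβ
    have h1 : xα - algebraMap (ZMod p) F z * xβ
        = xα + algebraMap (ZMod p) F (-z) * xβ := by
      rw [map_neg]; ring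
    rw [h1, hpol xα (algebraMap (ZMod p) F (-z) * xβ), hscal (-z) xβ]
    have h3 : L xα * (algebraMap (ZMod p) F (-z) * xβ)
        = algebraMap (ZMod p) F (-z) * (L xα * xβ) := by ring
    rw [h3, tr_smul]
    linear_combination (-z) * trhalf α xα hxα xβ
  -- ==== common reduction of the double sum ====
  have hred : ∀ xβ : F, L xβ = -(β / 2) →
      ∑ z : ZMod p, ∑ x : F,
        eP p (f x - Algebra.trace (ZMod p) F ((α - algebraMap (ZMod p) F z * β) * x))
      = ε * (p : ℂ) ^ m * GP p ^ (-(r : ℤ)) *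
          ∑ z : ZMod p, eP p (-(f xα + z ^ 2 * f xβ
            + z * Algebra.trace (ZMod p) F (α * xβ))) := by
    intro xβ hxβ
    rw [Finset.mul_sum]
    refine Finset.sum_congr rfl (fun z _ => ?_)
    rw [Smain (α - algebraMap (ZMod p) F z * β) (xα - algebraMap (ZMod p) F z * xβ)
      (hLz z xβ hxβ), hfz z xβ hxβ]
  refine ⟨?_, ?_, ?_, ?_⟩
  · -- case f xβ = 0, Tr(α xβ) = 0
    intro xβ hxβ hf0 htr0
    rw [hred xβ hxβ]
    have hconst : ∀ z : ZMod p,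
        eP p (-(f xα + z ^ 2 * f xβ + z * Algebra.trace (ZMod p) F (α * xβ)))
          = eP p (-(f xα)) := by
      intro z
      congr 1
      rw [hf0, htr0]
      ring
    rw [Finset.sum_congr rfl (fun z _ => hconst z), Finset.sum_const, Finset.card_univ,
      ZMod.card, nsmul_eq_mul, pow_succ]
    ring
  · -- case f xβ = 0, Tr(α xβ) ≠ 0
    intro xβ hxβ hf0 htr0
    rw [hred xβ hxβ]
    have hsplit : ∀ z : ZMod p,
        eP p (-(f xα + z ^ 2 * f xβ + z * Algebra.trace (ZMod p) F (α * xβ)))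
          = eP p (-(f xα)) * eP p ((-(Algebra.trace (ZMod p) F (α * xβ))) * z) := by
      intro z
      rw [← eP_add]
      congr 1
      rw [hf0]
      ring
    rw [Finset.sum_congr rfl (fun z _ => hsplit z), ← Finset.mul_sum,
      sum_eP_mul (neg_ne_zero.mpr htr0)]
    simp
  · -- case f xβ ≠ 0
    intro xβ hxβ hf0
    rw [hred xβ hxβ]
    have h4 : (4 : ZMod p) ≠ 0 := by
      have h22 := mul_ne_zero h2p h2p
      rwa [show (2 : ZMod p) * 2 = 4 by norm_num] at h22
    have hdecomp : ∀ z : ZMod p,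
        -(f xα + z ^ 2 * f xβ + z * Algebra.trace (ZMod p) F (α * xβ))
        = (-(f xα) + (Algebra.trace (ZMod p) F (α * xβ)) ^ 2 / (4 * f xβ))
          + (-(f xβ)) * (z + Algebra.trace (ZMod p) F (α * xβ) / (2 * f xβ)) ^ 2 := by
      intro z
      field_simp
      ring
    have hsplit : ∀ z : ZMod p,
        eP p (-(f xα + z ^ 2 * f xβ + z * Algebra.trace (ZMod p) F (α * xβ)))
        = eP p (-(f xα) + (Algebra.trace (ZMod p) F (α * xβ)) ^ 2 / (4 * f xβ))
          * eP p ((-(f xβ))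
              * (z + Algebra.trace (ZMod p) F (α * xβ) / (2 * f xβ)) ^ 2) := by
      intro z
      rw [← eP_add, hdecomp z]
    rw [Finset.sum_congr rfl (fun z _ => hsplit z), ← Finset.mul_sum]
    have hre : ∑ z : ZMod p, eP p ((-(f xβ))
          * (z + Algebra.trace (ZMod p) F (α * xβ) / (2 * f xβ)) ^ 2)
        = ∑ w : ZMod p, eP p ((-(f xβ)) * w ^ 2) :=
      Fintype.sum_equiv (Equiv.addRight (Algebra.trace (ZMod p) F (α * xβ) / (2 * f xβ)))
        _ _ (fun z => rfl)
    rw [hre, sum_eP_sq hp2 (neg_ne_zero.mpr hf0)]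
    rw [show -((r : ℤ) - 1) = -(r : ℤ) + 1 by ring, zpow_add₀ (GP_ne_zero hp2), zpow_one]
    ring
  · -- case β ∉ range L
    intro hβr
    have hz0 : ∀ z : ZMod p, z ≠ 0 → α - algebraMap (ZMod p) F z * β ∉ Set.range L := by
      intro z hz hc
      apply hβr
      rw [hrangeeq] at hc hα ⊢
      have h1 : algebraMap (ZMod p) F z * β
          = α - (α - algebraMap (ZMod p) F z * β) := by ring
      have h2 : algebraMap (ZMod p) F z * β ∈ LinearMap.range Lm := by
        rw [h1]
        exact Submodule.sub_mem _ hα hc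
      have h3 : β = z⁻¹ • (algebraMap (ZMod p) F z * β) := by
        rw [Algebra.smul_def, ← mul_assoc, ← map_mul, inv_mul_cancel₀ hz, map_one, one_mul]
      rw [h3]
      exact Submodule.smul_mem _ _ h2
    rw [Fintype.sum_eq_single (0 : ZMod p)
      (fun z hz => Szero _ (hz0 z hz))]
    simp only [map_zero, zero_mul, sub_zero]
    exact Smain α xα hxα
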